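/- arXiv:1507.02806 — 6 statements merged into one kernel-verified Lean document; each statement's English description precedes it below -/
import Mathlib

section
/- Let p be a prime and m ≥ 1 an integer. Then the number Θ_m of points of the Hermitian hypersurface x₁^{p+1} + ⋯ + x_m^{p+1} = 0 in ℙ^{m−1}(𝔽_{p²}) satisfies (p² − 1)·Θ_m = (p^m − (−1)^m)(p^{m−1} + (−1)^m). -/
open Projectivization

namespace HermAux

open Finset Polynomial

set_option linter.unusedSectionVars false

variable {p : ℕ} [hp : Fact p.Prime] {K : Type*} [Field K] [Fintype K] [DecidableEq K]

lemma charP (hK : Fintype.card K = p ^ 2) : CharP K p := by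
  rw [CharP.charP_iff_prime_eq_zero hp.out]
  have h : ((p : K)) ^ 2 = 0 := by
    have := FiniteField.cast_card_eq_zero K
    rw [hK] at this
    push_cast at this
    exact this
  exact pow_eq_zero_iff (n := 2) (by norm_num) |>.mp h

lemma pow_card2 (hK : Fintype.card K = p ^ 2) (x : K) : x ^ (p ^ 2) = x := by
  have := FiniteField.pow_card x
  rwa [hK] at this

lemma norm_fixed (hK : Fintype.card K = p ^ 2) (x : K) :
    (x ^ (p + 1)) ^ p = x ^ (p + 1) := by
  calc (x ^ (p + 1)) ^ p = x ^ (p ^ 2) * x ^ p := by ring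
  _ = x ^ (p + 1) := by rw [pow_card2 hK x]; ring

variable (p K) in
/-- The prime subfield, as roots of `y^p = y`. -/
def F : Finset K := univ.filter fun y : K => y ^ p = y

variable (p K) in
/-- Fibers of the norm map. -/
def R (c : K) : Finset K := univ.filter fun x : K => x ^ (p + 1) = c

variable (p K) in
/-- Image of the norm map. -/
def im : Finset K := univ.image fun x : K => x ^ (p + 1)

lemma card_F_le : (F p K).card ≤ p := by
  have hp1 : 1 < p := hp.out.one_lt
  have hsub : F p K ⊆ (X ^ p - X : K[X]).roots.toFinset := by
    intro y hy
    simp only [F, mem_filter, mem_univ, true_and] at hy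
    simp only [Multiset.mem_toFinset, mem_roots
      (FiniteField.X_pow_card_sub_X_ne_zero K hp1)]
    simp [hy, sub_eq_zero]
  calc (F p K).card ≤ (X ^ p - X : K[X]).roots.toFinset.card := card_le_card hsub
  _ ≤ Multiset.card (X ^ p - X : K[X]).roots := Multiset.toFinset_card_le _
  _ ≤ (X ^ p - X : K[X]).natDegree := card_roots' _
  _ = p := FiniteField.X_pow_card_sub_X_natDegree_eq K hp1

lemma zero_mem_F : (0 : K) ∈ F p K := by
  simp [F, zero_pow hp.out.ne_zero]

lemma neg_mem_F (hK : Fintype.card K = p ^ 2) {c : K} (hc : c ∈ F p K) :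
    -c ∈ F p K := by
  haveI := charP hK
  simp only [F, mem_filter, mem_univ, true_and] at hc ⊢
  have h := map_neg (frobenius K p) c
  simp only [frobenius_def] at h
  rw [h, hc]

lemma R_zero : R p K 0 = {0} := by
  ext x
  simp [R, pow_eq_zero_iff (Nat.succ_ne_zero p)]

lemma R_card_le (c : K) : (R p K c).card ≤ p + 1 := by
  have hsub : R p K c ⊆ (nthRoots (p + 1) c).toFinset := by
    intro x hx
    simp only [R, mem_filter, mem_univ, true_and] at hx
    simp [Multiset.mem_toFinset, mem_nthRoots (Nat.succ_pos p), hx]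
  calc (R p K c).card ≤ (nthRoots (p + 1) c).toFinset.card := card_le_card hsub
  _ ≤ Multiset.card (nthRoots (p + 1) c) := Multiset.toFinset_card_le _
  _ ≤ p + 1 := card_nthRoots _ _

lemma R_card_eq (a b : K) (ha : a ≠ 0) (hb : b ≠ 0) :
    (R p K (a ^ (p + 1))).card = (R p K (b ^ (p + 1))).card := by
  apply Finset.card_bij' (fun x _ => b * a⁻¹ * x) (fun x _ => a * b⁻¹ * x)
  · intro x hx
    simp only [R, mem_filter, mem_univ, true_and] at hx ⊢
    rw [mul_pow, mul_pow, hx, inv_pow]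
    field_simp
  · intro x hx
    simp only [R, mem_filter, mem_univ, true_and] at hx ⊢
    rw [mul_pow, mul_pow, hx, inv_pow]
    field_simp
  · intro x _
    field_simp
  · intro x _
    field_simp

lemma im_sub_F (hK : Fintype.card K = p ^ 2) : im p K ⊆ F p K := by
  intro c hc
  simp only [im, mem_image, mem_univ, true_and] at hc
  obtain ⟨x, rfl⟩ := hc
  simp only [F, mem_filter, mem_univ, true_and]
  exact norm_fixed hK x

lemma card_sum_fibers (hK : Fintype.card K = p ^ 2) :
    ∑ c ∈ im p K, (R p K c).card = p ^ 2 := by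
  have h := card_eq_sum_card_fiberwise
    (f := fun x : K => x ^ (p + 1)) (s := univ) (t := im p K)
    (fun x _ => mem_image_of_mem _ (mem_univ x))
  rw [card_univ, hK] at h
  simpa [R] using h.symm

lemma zero_mem_im : (0 : K) ∈ im p K := by
  simp only [im, mem_image, mem_univ, true_and]
  exact ⟨0, zero_pow (Nat.succ_ne_zero p)⟩

lemma pinch (hK : Fintype.card K = p ^ 2) :
    (im p K).card = p ∧ ∀ c ∈ im p K, c ≠ 0 → (R p K c).card = p + 1 := by
  have hp1 : 1 ≤ p := hp.out.one_le
  set t := ((im p K).erase 0).card with ht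
  set S := ∑ c ∈ (im p K).erase 0, (R p K c).card with hSdef
  have hsum : 1 + S = p ^ 2 := by
    rw [hSdef, ← card_sum_fibers hK, ← Finset.add_sum_erase _ _ zero_mem_im, R_zero,
      Finset.card_singleton]
  have hcard_le : t ≤ p - 1 := by
    have h1 := card_le_card (im_sub_F hK)
    have h2 := card_F_le (p := p) (K := K)
    have h3 := Finset.card_erase_add_one (zero_mem_im (p := p) (K := K))
    omega
  have hub : S ≤ t * (p + 1) := by
    calc S ≤ ∑ _c ∈ (im p K).erase 0, (p + 1) := Finset.sum_le_sum fun c _ => R_card_le c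
      _ = t * (p + 1) := by rw [Finset.sum_const, smul_eq_mul]
  have e1 : (p - 1) * (p + 1) + 1 = p ^ 2 := by
    obtain ⟨p', rfl⟩ : ∃ p', p = p' + 1 := ⟨p - 1, by omega⟩
    simp only [Nat.add_sub_cancel]
    ring
  have h3 : t * (p + 1) ≤ (p - 1) * (p + 1) := Nat.mul_le_mul_right _ hcard_le
  have h4 : (p - 1) * (p + 1) = S := by linarith
  have hSe : S = t * (p + 1) := le_antisymm hub (by linarith)
  have htp : t = p - 1 := by
    have heq : t * (p + 1) = (p - 1) * (p + 1) := by rw [← hSe, ← h4]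
    exact Nat.eq_of_mul_eq_mul_right (Nat.succ_pos p) heq
  constructor
  · have h3 := Finset.card_erase_add_one (zero_mem_im (p := p) (K := K))
    omega
  · intro c hc hc0
    by_contra hne
    have hlt : (R p K c).card < p + 1 := lt_of_le_of_ne (R_card_le c) hne
    have hmem : c ∈ (im p K).erase 0 := Finset.mem_erase.mpr ⟨hc0, hc⟩
    have hstrict : S < t * (p + 1) := by
      calc S < ∑ _x ∈ (im p K).erase 0, (p + 1) :=
            Finset.sum_lt_sum (fun i _ => R_card_le i) ⟨c, hmem, hlt⟩
        _ = _ := by rw [Finset.sum_const, smul_eq_mul]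
    exact absurd hSe (ne_of_lt hstrict)

lemma im_eq_F (hK : Fintype.card K = p ^ 2) : im p K = F p K :=
  Finset.eq_of_subset_of_card_le (im_sub_F hK) (by rw [(pinch hK).1]; exact card_F_le)

variable (p K) in
/-- Number of affine solutions of the Hermitian equation with value `c`. -/
def N (m : ℕ) (c : K) : ℕ :=
  (univ.filter fun x : Fin m → K => ∑ i, x i ^ (p + 1) = c).card

lemma val_mem_F (hK : Fintype.card K = p ^ 2) {m : ℕ} (x : Fin m → K) :
    (∑ i, x i ^ (p + 1)) ∈ F p K := by
  haveI := charP hK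
  simp only [F, mem_filter, mem_univ, true_and]
  have h := map_sum (frobenius K p) (fun i => x i ^ (p + 1)) univ
  simp only [frobenius_def] at h
  rw [h]
  exact Finset.sum_congr rfl fun i _ => norm_fixed hK (x i)

lemma N_total (hK : Fintype.card K = p ^ 2) (m : ℕ) :
    ∑ c ∈ F p K, N p K m c = (p ^ 2) ^ m := by
  have h := card_eq_sum_card_fiberwise
    (f := fun x : Fin m → K => ∑ i, x i ^ (p + 1)) (s := univ) (t := F p K)
    (fun x _ => val_mem_F hK x)
  rw [card_univ] at h
  have hcard : Fintype.card (Fin m → K) = (p ^ 2) ^ m := by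
    rw [Fintype.card_fun, Fintype.card_fin, hK]
  rw [hcard] at h
  rw [h]
  rfl

lemma N_zero_zero : N p K 0 0 = 1 := by
  have h : ∀ x : Fin 0 → K, ∑ i, x i ^ (p + 1) = 0 := fun x => by simp
  rw [N, filter_true_of_mem (fun x _ => h x), card_univ]
  simp

lemma step_a (m : ℕ) :
    N p K (m + 1) 0 = ∑ t : K, N p K m (-(t ^ (p + 1))) := by
  have h := card_eq_sum_card_fiberwise
    (f := fun x : Fin (m + 1) → K => x 0)
    (s := univ.filter fun x : Fin (m + 1) → K => ∑ i, x i ^ (p + 1) = 0)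
    (t := (univ : Finset K)) (fun x _ => mem_univ _)
  rw [N, h]
  refine Finset.sum_congr rfl fun t _ => ?_
  refine Finset.card_bij' (fun x _ => Fin.tail x) (fun y _ => Fin.cons t y) ?_ ?_ ?_ ?_
  · intro x hx
    simp only [mem_filter, mem_univ, true_and] at hx ⊢
    obtain ⟨hsum, hx0⟩ := hx
    rw [Fin.sum_univ_succ, hx0] at hsum
    have heq : ∑ i : Fin m, Fin.tail x i ^ (p + 1) = ∑ i : Fin m, x i.succ ^ (p + 1) := rfl
    rw [heq]
    exact eq_neg_of_add_eq_zero_right hsum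
  · intro y hy
    simp only [mem_filter, mem_univ, true_and] at hy ⊢
    refine ⟨?_, ?_⟩
    · rw [Fin.sum_univ_succ]
      simp only [Fin.cons_zero, Fin.cons_succ]
      rw [hy]
      ring
    · simp
  · intro x hx
    simp only [mem_filter, mem_univ, true_and] at hx
    show Fin.cons t (Fin.tail x) = x
    have h2 := Fin.cons_self_tail x
    rw [hx.2] at h2
    exact h2
  · intro y _
    simp

lemma step_b (m : ℕ) :
    ∑ t : K, N p K m (-(t ^ (p + 1))) =
      ∑ c ∈ im p K, (R p K c).card * N p K m (-c) := by
  have h := Finset.sum_comp (s := (univ : Finset K))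
    (f := fun c : K => N p K m (-c)) (g := fun t : K => t ^ (p + 1))
  simp only [smul_eq_mul] at h
  rw [h]
  rfl

lemma step_d (hK : Fintype.card K = p ^ 2) (m : ℕ) :
    ∑ c ∈ (F p K).erase 0, N p K m (-c) = ∑ c ∈ (F p K).erase 0, N p K m c := by
  apply Finset.sum_nbij' (i := fun c => -c) (j := fun c => -c)
  · intro a ha
    rw [mem_erase] at ha ⊢
    exact ⟨neg_ne_zero.mpr ha.1, neg_mem_F hK ha.2⟩
  · intro a ha
    rw [mem_erase] at ha ⊢
    exact ⟨neg_ne_zero.mpr ha.1, neg_mem_F hK ha.2⟩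
  · intro a _; simp
  · intro a _; simp
  · intro a _; rfl

lemma N_rec (hK : Fintype.card K = p ^ 2) (m : ℕ) :
    N p K (m + 1) 0 + p * N p K m 0 = (p + 1) * (p ^ 2) ^ m := by
  have htot : N p K m 0 + ∑ c ∈ (F p K).erase 0, N p K m c = (p ^ 2) ^ m := by
    rw [← N_total hK m, ← Finset.add_sum_erase _ _ zero_mem_F]
  have hexp : N p K (m + 1) 0
      = N p K m 0 + (p + 1) * ∑ c ∈ (F p K).erase 0, N p K m c := by
    rw [step_a, step_b, ← Finset.add_sum_erase _ _ zero_mem_im, R_zero,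
      Finset.card_singleton, neg_zero, one_mul]
    congr 1
    have him : (im p K).erase 0 = (F p K).erase 0 := by rw [im_eq_F hK]
    rw [him, ← step_d hK m, Finset.mul_sum]
    refine Finset.sum_congr rfl fun c hc => ?_
    rw [mem_erase] at hc
    rw [(pinch hK).2 c (by rw [im_eq_F hK]; exact hc.2) hc.1]
  calc N p K (m + 1) 0 + p * N p K m 0
      = (N p K m 0 + (p + 1) * ∑ c ∈ (F p K).erase 0, N p K m c) + p * N p K m 0 := by
        rw [hexp]
    _ = (p + 1) * (N p K m 0 + ∑ c ∈ (F p K).erase 0, N p K m c) := by ring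
    _ = (p + 1) * (p ^ 2) ^ m := by rw [htot]

lemma N_closed (hK : Fintype.card K = p ^ 2) (m : ℕ) :
    (p : ℤ) * N p K m 0 = (p : ℤ) ^ (2 * m) + (-1) ^ m * (p : ℤ) ^ m * ((p : ℤ) - 1) := by
  induction m with
  | zero => simp [N_zero_zero]
  | succ m IH =>
    have h1 : (N p K (m + 1) 0 : ℤ) + (p : ℤ) * (N p K m 0 : ℤ)
        = ((p : ℤ) + 1) * ((p : ℤ) ^ 2) ^ m := by
      exact_mod_cast N_rec hK m
    linear_combination (p : ℤ) * h1 - (p : ℤ) * IH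

lemma P_smul_iff (m : ℕ) (c : Kˣ) (v : Fin m → K) :
    (∑ i, (c • v) i ^ (p + 1) = 0) ↔ (∑ i, v i ^ (p + 1) = 0) := by
  have h : ∑ i, (c • v) i ^ (p + 1) = (c : K) ^ (p + 1) * ∑ i, v i ^ (p + 1) := by
    rw [Finset.mul_sum]
    refine Finset.sum_congr rfl fun i _ => ?_
    simp only [Pi.smul_apply, Units.smul_def, smul_eq_mul, mul_pow]
  rw [h, mul_eq_zero]
  have hc : ((c : K)) ^ (p + 1) ≠ 0 := pow_ne_zero _ c.ne_zero
  tauto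

lemma proj_count (m : ℕ) :
    Nat.card {x : Projectivization K (Fin m → K) // ∑ i, x.rep i ^ (p + 1) = 0}
      * (Fintype.card K - 1) + 1 = N p K m 0 := by
  classical
  set P : (Fin m → K) → Prop := fun v => ∑ i, v i ^ (p + 1) = 0 with hP
  have hinv : ∀ (c : Kˣ) (v : Fin m → K), P (c • v) ↔ P v := P_smul_iff m
  have e : {x : Projectivization K (Fin m → K) // P x.rep} × Kˣ ≃
      {v : Fin m → K // P v ∧ v ≠ 0} := by
    refine Equiv.ofBijective
      (fun y => ⟨(y.2 : Kˣ) • y.1.1.rep, (hinv _ _).mpr y.1.2, ?_⟩) ⟨?_, ?_⟩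
    · rw [Ne, smul_eq_zero_iff_eq]
      exact y.1.1.rep_nonzero
    · rintro ⟨⟨x, hx⟩, c⟩ ⟨⟨y, hy⟩, d⟩ hab
      have hab' : c • x.rep = d • y.rep := congrArg Subtype.val hab
      have hxy : x = y := by
        have h1 : Projectivization.mk K x.rep x.rep_nonzero
            = Projectivization.mk K y.rep y.rep_nonzero := by
          rw [Projectivization.mk_eq_mk_iff]
          exact ⟨c⁻¹ * d, by rw [mul_smul, ← hab', inv_smul_smul]⟩
        rwa [Projectivization.mk_rep, Projectivization.mk_rep] at h1
      subst hxy
      have hcd : c = d := by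
        obtain ⟨i, hi⟩ := Function.ne_iff.mp x.rep_nonzero
        have h2 := congrFun hab' i
        simp only [Pi.smul_apply, Units.smul_def, smul_eq_mul] at h2
        exact Units.ext (mul_right_cancel₀ hi h2)
      simp only [Prod.mk.injEq, Subtype.mk.injEq]
      exact ⟨trivial, hcd⟩
    · rintro ⟨v, hv, hv0⟩
      set x := Projectivization.mk K v hv0 with hxdef
      have hmk : Projectivization.mk K x.rep x.rep_nonzero
          = Projectivization.mk K v hv0 := by rw [Projectivization.mk_rep]
      obtain ⟨a, ha⟩ := (Projectivization.mk_eq_mk_iff K _ _ _ _).mp hmk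
      refine ⟨⟨⟨x, ?_⟩, a⁻¹⟩, ?_⟩
      · rw [← ha]
        exact (hinv a v).mpr hv
      · apply Subtype.ext
        show (a⁻¹ : Kˣ) • x.rep = v
        rw [← ha, inv_smul_smul]
  have h1 : Nat.card {x : Projectivization K (Fin m → K) // P x.rep} * Nat.card Kˣ
      = Nat.card {v : Fin m → K // P v ∧ v ≠ 0} := by
    rw [← Nat.card_prod]
    exact Nat.card_congr e
  have hKu : Nat.card Kˣ = Fintype.card K - 1 := by
    rw [Nat.card_eq_fintype_card, Fintype.card_units]
  have h2 : Nat.card {v : Fin m → K // P v ∧ v ≠ 0} + 1 = N p K m 0 := by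
    rw [Nat.card_eq_fintype_card, Fintype.card_subtype]
    have hfe : (univ.filter fun v : Fin m → K => P v ∧ v ≠ 0)
        = (univ.filter fun v : Fin m → K => P v).erase 0 := by
      ext v
      simp only [mem_filter, mem_univ, true_and, mem_erase]
      tauto
    rw [hfe, Finset.card_erase_add_one]
    · rfl
    · simp only [mem_filter, mem_univ, true_and, hP]
      simp [zero_pow (Nat.succ_ne_zero p)]
  rw [hKu] at h1
  rw [← h2, h1]

end HermAux

/-- The number of points of the Hermitian hypersurface
`x₁^(p+1) + ⋯ + x_m^(p+1) = 0` in `ℙ^(m-1)(𝔽_{p²})`. -/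
noncomputable def hermTheta (p : ℕ) [Fact p.Prime] (m : ℕ) : ℕ :=
  Nat.card {x : Projectivization (GaloisField p 2) (Fin m → GaloisField p 2) //
    ∑ i, (x.rep i) ^ (p + 1) = 0}

theorem hermTheta_formula (p : ℕ) [Fact p.Prime] (m : ℕ) (hm : 1 ≤ m) :
    ((p : ℤ) ^ 2 - 1) * (hermTheta p m : ℤ) =
      ((p : ℤ) ^ m - (-1) ^ m) * ((p : ℤ) ^ (m - 1) + (-1) ^ m) := by
  classical
  letI : Fintype (GaloisField p 2) := Fintype.ofFinite _
  have hK : Fintype.card (GaloisField p 2) = p ^ 2 := by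
    rw [← Nat.card_eq_fintype_card]
    exact GaloisField.card p 2 (by norm_num)
  have hcount := HermAux.proj_count (p := p) (K := GaloisField p 2) m
  have hclosed := HermAux.N_closed (p := p) (K := GaloisField p 2) hK m
  rw [hK] at hcount
  have hp2 : 1 ≤ p ^ 2 := Nat.one_le_pow _ _ (Fact.out (p := p.Prime)).pos
  have hTheta : hermTheta p m
      = Nat.card {x : Projectivization (GaloisField p 2) (Fin m → GaloisField p 2) //
          ∑ i, (x.rep i) ^ (p + 1) = 0} := rfl
  have hc : (hermTheta p m : ℤ) * ((p : ℤ) ^ 2 - 1) + 1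
      = (HermAux.N p (GaloisField p 2) m 0 : ℤ) := by
    rw [hTheta]
    have h := congrArg (Nat.cast (R := ℤ)) hcount
    push_cast [Nat.cast_sub hp2] at h
    linarith
  obtain ⟨k, rfl⟩ : ∃ k, m = k + 1 := ⟨m - 1, by omega⟩
  simp only [Nat.add_sub_cancel]
  have hs : ((-1 : ℤ)) ^ (k + 1) * (-1 : ℤ) ^ (k + 1) = 1 := by
    rw [← pow_add, show (k + 1) + (k + 1) = 2 * (k + 1) by ring, pow_mul]
    norm_num
  have hp0 : (p : ℤ) ≠ 0 := Nat.cast_ne_zero.mpr (Fact.out (p := p.Prime)).pos.ne'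
  apply mul_left_cancel₀ hp0
  linear_combination (p : ℤ) * hc + hclosed + (p : ℤ) * hs
end

section
/- Let p be a prime and m ≥ 2 an integer. Write N_{m−1} for the total number of one-dimensional 𝔽_{p²}-subspaces of 𝔽_{p²}^{m−1} (i.e., the number of points of ℙ^{m−2}(𝔽_{p²})). Then Θ_m = Θ_{m−1} + (N_{m−1} − Θ_{m−1})·(p + 1). -/
open Projectivization

/-- The total number of points of `ℙ^(m-1)(𝔽_{p²})`, i.e. of one-dimensional
`𝔽_{p²}`-subspaces of `𝔽_{p²}^m`. -/
noncomputable def projCard (p : ℕ) [Fact p.Prime] (m : ℕ) : ℕ :=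
  Nat.card (Projectivization (GaloisField p 2) (Fin m → GaloisField p 2))

/-!
Over `𝔽_{p²} / 𝔽_p` the map `x ↦ x^(p+1)` is the norm, so the Hermitian form is the norm form
`N(x₁) + ⋯ + N(x_m)`; the argument works for any extension `L / K` of finite fields. The norm is
surjective, with fibre `{0}` over `0` and fibres of size `e = (|L| - 1) / (|K| - 1)` (`= p + 1`)
elsewhere. Splitting off one coordinate, the number `Z_m` of zeros of the norm form in `L^m`
therefore satisfies `Z_{n+1} = Z_n + (|L|^n - Z_n) e`, and passing to lines via
`Z_m = Θ_m (|L| - 1) + 1` and `|L|^n = N_n (|L| - 1) + 1` gives the recursion.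
-/

open scoped LinearAlgebra.Projectivization

theorem Nat.card_subtype_eq_card_ne_zero_add_one {V : Type*} [Zero V] [Finite V] {P : V → Prop}
    (h0 : P 0) : Nat.card {v // P v} = Nat.card {v // v ≠ 0 ∧ P v} + 1 := by
  have : {v | P v} = insert 0 {v | v ≠ 0 ∧ P v} := by
    ext v
    by_cases hv : v = 0 <;> simp [hv, h0]
  change Nat.card {v | P v} = Nat.card ↥{v | v ≠ 0 ∧ P v} + 1
  rw [this, Nat.card_coe_set_eq, Nat.card_coe_set_eq, Set.ncard_insert_of_notMem (by simp)]

theorem Projectivization.card_subtype_ne_zero_and {k V : Type*} [Field k] [AddCommGroup V]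
    [Module k V] (P : V → Prop) (hP : ∀ (c : kˣ) (v : V), P (c • v) ↔ P v) :
    Nat.card {v // v ≠ 0 ∧ P v} = Nat.card {x : ℙ k V // P x.rep} * Nat.card kˣ := by
  have rep_iff (v : {v : V // v ≠ 0}) :
      P v ↔ P (nonZeroEquivProjectivizationProdUnits k V v).1.rep := by
    obtain ⟨c, hc⟩ := exists_smul_eq_mk_rep k v.1 v.2
    rw [← hP c, hc]
    rfl
  rw [← Nat.card_prod, Nat.card_congr ((Equiv.subtypeSubtypeEquivSubtypeInter _ P).symm.trans
    ((Equiv.subtypeEquiv _ rep_iff).trans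
      (Equiv.prodSubtypeFstEquivSubtypeProd (p := fun x : ℙ k V => P x.rep))))]

namespace FiniteField

variable (K : Type*) {L : Type*} [Field K] [Field L] [Algebra K L] [Finite L]

theorem card_norm_fiber_mul_of_ne_zero {c : K} (hc : c ≠ 0) :
    Nat.card {x : L // Algebra.norm K x = c} * (Nat.card K - 1) = Nat.card L - 1 := by
  set f : Lˣ →* Kˣ := Units.map (Algebra.norm K)
  have hf : Function.Surjective f := unitsMap_norm_surjective K L
  have fiber : {x : L // Algebra.norm K x = c} ≃ f ⁻¹' {Units.mk0 c hc} :=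
    { toFun x := ⟨Units.mk0 x.1 fun h => hc (by simp [← x.2, h]), Units.ext x.2⟩
      invFun u := ⟨u.1, congrArg Units.val u.2⟩
      left_inv _ := rfl
      right_inv _ := Subtype.ext (Units.ext rfl) }
  rw [Nat.card_congr (fiber.trans (f.fiberEquivKerOfSurjective hf _)), ← Nat.card_units,
    ← Nat.card_units, ← f.ker.card_mul_index, Subgroup.index_ker,
    f.range_eq_top.2 hf, Subgroup.card_top]

variable (L) in
noncomputable def normHypersurfaceCard (m : ℕ) : ℕ :=
  Nat.card {x : ℙ L (Fin m → L) // ∑ i, Algebra.norm K (x.rep i) = 0}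

theorem card_sum_norm_eq_zero (m : ℕ) :
    Nat.card {v : Fin m → L // ∑ i, Algebra.norm K (v i) = 0} =
      normHypersurfaceCard K L m * (Nat.card L - 1) + 1 := by
  have smul_iff (c : Lˣ) (v : Fin m → L) :
      ∑ i, Algebra.norm K ((c • v) i) = 0 ↔ ∑ i, Algebra.norm K (v i) = 0 := by
    simp [Units.smul_def, ← Finset.mul_sum]
  rw [Nat.card_subtype_eq_card_ne_zero_add_one (by simp),
    Projectivization.card_subtype_ne_zero_and _ smul_iff, Nat.card_units, normHypersurfaceCard]

variable [Finite K]

theorem card_norm_fiber [DecidableEq K] (c : K) :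
    Nat.card {x : L // Algebra.norm K x = c} =
      if c = 0 then 1 else (Nat.card L - 1) / (Nat.card K - 1) := by
  split_ifs with hc
  · subst hc
    simp only [Algebra.norm_eq_zero_iff]
    exact Nat.card_unique
  · have : 1 < Nat.card K := Finite.one_lt_card
    rw [← card_norm_fiber_mul_of_ne_zero K hc, Nat.mul_div_cancel _ (by omega)]

theorem card_add_norm_eq_zero {α : Type*} [Finite α] (f : α → K) :
    Nat.card {z : α × L // f z.1 + Algebra.norm K z.2 = 0} =
      Nat.card {a // f a = 0} +
        Nat.card {a // f a ≠ 0} * ((Nat.card L - 1) / (Nat.card K - 1)) := by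
  classical
  have := Fintype.ofFinite α
  have fiber (a : α) :
      {x : L // f a + Algebra.norm K x = 0} ≃ {x : L // Algebra.norm K x = -f a} :=
    Equiv.subtypeEquivRight fun x => by rw [add_comm, add_eq_zero_iff_eq_neg]
  simp only [Nat.card_congr (Equiv.subtypeProdEquivSigmaSubtype fun a x =>
      f a + Algebra.norm K x = 0), Nat.card_sigma, Nat.card_congr (fiber _), card_norm_fiber,
    neg_eq_zero, Finset.sum_ite, Finset.sum_const, smul_eq_mul, mul_one, Nat.card_eq_fintype_card,
    Fintype.card_subtype]

theorem card_sum_norm_eq_zero_succ (n : ℕ) :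
    Nat.card {v : Fin (n + 1) → L // ∑ i, Algebra.norm K (v i) = 0} =
      Nat.card {v : Fin n → L // ∑ i, Algebra.norm K (v i) = 0} +
        Nat.card {v : Fin n → L // ∑ i, Algebra.norm K (v i) ≠ 0} *
          ((Nat.card L - 1) / (Nat.card K - 1)) := by
  let e : (Fin n → L) × L ≃ (Fin (n + 1) → L) :=
    (Equiv.prodComm _ _).trans (Fin.consEquiv fun _ => L)
  have split (z : (Fin n → L) × L) : ∑ i, Algebra.norm K (z.1 i) + Algebra.norm K z.2 = 0 ↔
      ∑ i, Algebra.norm K (e z i) = 0 := by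
    simp [e, Fin.sum_univ_succ, add_comm]
  rw [← card_add_norm_eq_zero,
    Nat.card_congr (e.subtypeEquiv (q := fun v => ∑ i, Algebra.norm K (v i) = 0) split)]

theorem normHypersurfaceCard_succ (n : ℕ) :
    (normHypersurfaceCard K L (n + 1) : ℤ) = normHypersurfaceCard K L n +
      ((Nat.card (ℙ L (Fin n → L)) : ℤ) - normHypersurfaceCard K L n) *
        ((Nat.card L - 1) / (Nat.card K - 1) : ℕ) := by
  classical
  have hrec := card_sum_norm_eq_zero_succ K (L := L) n
  have hcompl : Nat.card {v : Fin n → L // ∑ i, Algebra.norm K (v i) = 0} +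
      Nat.card {v : Fin n → L // ∑ i, Algebra.norm K (v i) ≠ 0} = Nat.card (Fin n → L) := by
    rw [← Nat.card_sum, Nat.card_congr (Equiv.sumCompl _)]
  rw [card_sum_norm_eq_zero, card_sum_norm_eq_zero] at hrec
  rw [card_sum_norm_eq_zero, Projectivization.card' L (Fin n → L)] at hcompl
  have hd : Nat.card L - 1 ≠ 0 := by have : 1 < Nat.card L := Finite.one_lt_card; omega
  generalize (Nat.card L - 1) / (Nat.card K - 1) = e at hrec ⊢
  generalize Nat.card L - 1 = d at hrec hcompl hd
  zify at hrec hcompl hd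
  apply mul_right_cancel₀ hd
  linear_combination hrec + e * hcompl

end FiniteField

namespace GaloisField

variable (p : ℕ) [Fact p.Prime]

theorem card_sub_one_div_card_zmod_sub_one :
    (Nat.card (GaloisField p 2) - 1) / (Nat.card (ZMod p) - 1) = p + 1 := by
  have hp : 1 < p := (Fact.out : p.Prime).one_lt
  rw [GaloisField.card p 2 two_ne_zero, Nat.card_zmod, ← Nat.one_pow 2, Nat.sq_sub_sq,
    Nat.mul_div_cancel _ (by omega)]

end GaloisField

theorem hermTheta_eq_normHypersurfaceCard (p : ℕ) [Fact p.Prime] (m : ℕ) :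
    hermTheta p m = FiniteField.normHypersurfaceCard (ZMod p) (GaloisField p 2) m := by
  have pow_eq_norm (y : GaloisField p 2) :
      y ^ (p + 1) = algebraMap _ _ (Algebra.norm (ZMod p) y) := by
    rw [FiniteField.algebraMap_norm_eq_pow, GaloisField.card_sub_one_div_card_zmod_sub_one]
  refine Nat.card_congr (Equiv.subtypeEquivRight fun x => ?_)
  simp only [pow_eq_norm, ← map_sum, FaithfulSMul.algebraMap_eq_zero_iff]

theorem hermTheta_recursion (p : ℕ) [Fact p.Prime] (m : ℕ) (hm : 2 ≤ m) :
    (hermTheta p m : ℤ) =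
      (hermTheta p (m - 1) : ℤ) +
        ((projCard p (m - 1) : ℤ) - (hermTheta p (m - 1) : ℤ)) * ((p : ℤ) + 1) := by
  obtain ⟨n, rfl⟩ : ∃ n, m = n + 1 := ⟨m - 1, by omega⟩
  rw [Nat.add_sub_cancel, hermTheta_eq_normHypersurfaceCard, hermTheta_eq_normHypersurfaceCard,
    projCard, FiniteField.normHypersurfaceCard_succ,
    GaloisField.card_sub_one_div_card_zmod_sub_one]
  push_cast
  rfl
end

section
/- Let p be a prime and m ≥ 2 an integer. Then (p² − 1)·Θ_m > p^{2m−2} − 1; that is, Θ_m is strictly greater than (p^{2m−2} − 1)/(p² − 1), the number of points of ℙ^{m−2}(𝔽_{p²}). -/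
open Projectivization

/-!
Scaling by `𝔽_{p²}ˣ` identifies the nonzero isotropic vectors with `𝔽_{p²}ˣ` times the points
counted by `Θ_m`, so `(p² - 1) Θ_m` is their number. The map `x ↦ x ^ (p + 1)` sends `𝔽_{p²}`
onto the Frobenius-fixed field `𝔽_p` (in the cyclic group `𝔽_{p²}ˣ` of order `(p + 1)(p - 1)`
the image of the `(p + 1)`-th power map is the kernel of the `(p - 1)`-th one), and `𝔽_p`
contains the value of the Hermitian form. So every nonzero `w ∈ 𝔽_{p²}^(m-1)` is the tail of a
nonzero isotropic vector `(x, w)`, and for `w = e₁` there are two choices of `x`, differing by a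
nontrivial `(p + 1)`-th root of unity. Hence there are more than `p^(2m-2) - 1` nonzero
isotropic vectors.
-/

open scoped LinearAlgebra.Projectivization

theorem Projectivization.card_subtype_rep_mul_card_units {k V : Type*} [DivisionRing k]
    [AddCommGroup V] [Module k V] (P : V → Prop) (hP : ∀ (c : kˣ) (v : V), P (c • v) ↔ P v) :
    Nat.card {x : ℙ k V // P x.rep} * Nat.card kˣ = Nat.card {v : V // v ≠ 0 ∧ P v} := by
  have hrep (v : {v : V // v ≠ 0}) :
      P v ↔ P (nonZeroEquivProjectivizationProdUnits k V v).1.rep := by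
    obtain ⟨c, hc⟩ := exists_smul_eq_mk_rep k v.1 v.2
    change _ ↔ P (mk k v.1 v.2).rep
    rw [← hc, hP]
  rw [← Nat.card_prod, ← Nat.card_congr (Equiv.subtypeSubtypeEquivSubtypeInter _ P),
    Nat.card_congr ((nonZeroEquivProjectivizationProdUnits k V).subtypeEquiv
      (q := fun y ↦ P y.1.rep) hrep),
    Nat.card_congr (Equiv.prodSubtypeFstEquivSubtypeProd (p := fun x : ℙ k V ↦ P x.rep))]

theorem IsCyclic.range_powMonoidHom_eq_ker {G : Type*} [CommGroup G] [IsCyclic G] [Finite G]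
    {d e : ℕ} (h : Nat.card G = d * e) :
    (powMonoidHom d : G →* G).range = (powMonoidHom e).ker := by
  have hd : d ≠ 0 := by
    rintro rfl
    simpa [h] using (Nat.card_pos (α := G)).ne'
  refine Subgroup.eq_of_le_of_card_ge ?_ ?_
  · rintro _ ⟨x, rfl⟩
    simp [← pow_mul, ← h, pow_card_eq_one']
  · rw [IsCyclic.card_powMonoidHom_ker, IsCyclic.card_powMonoidHom_range, h,
      Nat.gcd_mul_left_left, Nat.gcd_eq_right (dvd_mul_right d e),
      Nat.mul_div_cancel_left _ hd.bot_lt]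

theorem Finite.card_lt_of_surjective_not_injective {α β : Type*} [Finite α] {f : α → β}
    (hsurj : Function.Surjective f) (hinj : ¬Function.Injective f) :
    Nat.card β < Nat.card α := by
  have : Finite β := Finite.of_surjective f hsurj
  have := Fintype.ofFinite α
  have := Fintype.ofFinite β
  simpa only [Nat.card_eq_fintype_card] using
    Fintype.card_lt_of_surjective_not_injective f hsurj hinj

theorem Nat.card_subtype_ne_zero_add_one {V : Type*} [Zero V] [Finite V] :
    Nat.card {v : V // v ≠ 0} + 1 = Nat.card V := by
  classical
  rw [← Finite.card_option, Nat.card_congr (Equiv.optionSubtypeNe (0 : V))]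

theorem ne_zero_of_card_eq_sq {α : Type*} [Finite α] [Nonempty α] {p : ℕ}
    (h : Nat.card α = p ^ 2) : p ≠ 0 := by
  rintro rfl
  simpa [h] using (Nat.card_pos (α := α)).ne'

theorem card_units_of_card_eq_sq {G₀ : Type*} [GroupWithZero G₀] {p : ℕ}
    (h : Nat.card G₀ = p ^ 2) : Nat.card G₀ˣ = (p + 1) * (p - 1) := by
  rw [Nat.card_units, h, ← Nat.sq_sub_sq, one_pow]

section FiniteField

variable {K : Type*} [Field K] [Finite K] {p : ℕ}

theorem exists_pow_succ_eq_of_pow_eq_self (hK : Nat.card K = p ^ 2) {a : K} (ha : a ^ p = a) :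
    ∃ x : K, x ^ (p + 1) = a := by
  rcases eq_or_ne a 0 with rfl | ha0
  · exact ⟨0, zero_pow p.succ_ne_zero⟩
  have hu : Units.mk0 a ha0 ∈ (powMonoidHom (p - 1) : Kˣ →* Kˣ).ker := by
    have hp := ne_zero_of_card_eq_sq hK
    refine Units.ext (mul_right_cancel₀ ha0 ?_)
    simp [← pow_succ, Nat.sub_add_cancel (Nat.one_le_iff_ne_zero.mpr hp), ha]
  rw [← IsCyclic.range_powMonoidHom_eq_ker (card_units_of_card_eq_sq hK)] at hu
  obtain ⟨y, hy⟩ := hu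
  exact ⟨y, by simpa using congrArg Units.val hy⟩

theorem exists_ne_one_pow_succ_eq_one (hK : Nat.card K = p ^ 2) :
    ∃ ζ : K, ζ ≠ 1 ∧ ζ ^ (p + 1) = 1 := by
  have hcard : Nat.card (powMonoidHom (p + 1) : Kˣ →* Kˣ).ker = p + 1 := by
    rw [IsCyclic.card_powMonoidHom_ker, card_units_of_card_eq_sq hK, Nat.gcd_mul_right_left]
  have hne : (powMonoidHom (p + 1) : Kˣ →* Kˣ).ker ≠ ⊥ := by
    rw [← Subgroup.one_lt_card_iff_ne_bot, hcard]
    have := ne_zero_of_card_eq_sq hK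
    omega
  obtain ⟨⟨ζ, hζ⟩, hζ1⟩ := Subgroup.ne_bot_iff_exists_ne_one.mp hne
  exact ⟨ζ, fun h ↦ hζ1 (Subtype.ext (Units.ext h)), by simpa using congrArg Units.val hζ⟩

theorem exists_ne_pow_succ_eq (hK : Nat.card K = p ^ 2) {c : K} (hc0 : c ≠ 0) (hc : c ^ p = c) :
    ∃ x y : K, x ≠ y ∧ x ^ (p + 1) = c ∧ y ^ (p + 1) = c := by
  obtain ⟨x, hx⟩ := exists_pow_succ_eq_of_pow_eq_self hK hc
  obtain ⟨ζ, hζ1, hζ⟩ := exists_ne_one_pow_succ_eq_one hK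
  have hx0 : x ≠ 0 := by
    rintro rfl
    exact hc0 (by simp [← hx])
  refine ⟨x, ζ * x, fun h ↦ hζ1 ?_, hx, by rw [mul_pow, hζ, one_mul, hx]⟩
  exact (mul_eq_right₀ hx0).mp h.symm

end FiniteField

def hermNorm (p : ℕ) {ι K : Type*} [Fintype ι] [CommSemiring K] (v : ι → K) : K :=
  ∑ i, v i ^ (p + 1)

section HermNorm

variable {K : Type*} [CommSemiring K] (p : ℕ)

theorem hermNorm_smul {ι : Type*} [Fintype ι] (c : K) (v : ι → K) :
    hermNorm p (c • v) = c ^ (p + 1) * hermNorm p v := by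
  simp [hermNorm, mul_pow, Finset.mul_sum]

theorem hermNorm_cons {n : ℕ} (x : K) (w : Fin n → K) :
    hermNorm p (Fin.cons x w : Fin (n + 1) → K) = x ^ (p + 1) + hermNorm p w := by
  simp [hermNorm, Fin.sum_univ_succ]

theorem hermNorm_single {ι : Type*} [Fintype ι] [DecidableEq ι] (i : ι) (c : K) :
    hermNorm p (Pi.single i c) = c ^ (p + 1) := by
  simp [hermNorm, Pi.single_apply]

theorem tail_ne_zero_of_hermNorm_eq_zero [NoZeroDivisors K] {n : ℕ} {v : Fin (n + 1) → K}
    (hv : v ≠ 0) (h : hermNorm p v = 0) : Fin.tail v ≠ 0 := by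
  intro htail
  rw [← Fin.cons_self_tail v, htail, hermNorm_cons] at h
  have h0 : v 0 = 0 := pow_eq_zero_iff p.succ_ne_zero |>.mp (by simpa [hermNorm] using h)
  exact hv (by rw [← Fin.cons_self_tail v, htail, h0]; exact Matrix.cons_zero_zero)

end HermNorm

section Isotropic

variable {K : Type*} [Field K] [Finite K] (p : ℕ) [Fact p.Prime] [CharP K p]

theorem neg_hermNorm_pow_char (hK : Nat.card K = p ^ 2) {ι : Type*} [Fintype ι] (v : ι → K) :
    (-hermNorm p v) ^ p = -hermNorm p v := by
  have : Fintype K := Fintype.ofFinite K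
  have hfix (x : K) : x ^ p ^ 2 = x := by
    rw [← hK, Nat.card_eq_fintype_card, FiniteField.pow_card]
  have hsum : hermNorm p v ^ p = hermNorm p v := by
    simp only [hermNorm, sum_pow_char, ← pow_mul]
    refine Finset.sum_congr rfl fun i _ ↦ ?_
    rw [show (p + 1) * p = p ^ 2 + p by ring, pow_add, hfix, ← pow_succ']
  rw [neg_pow, neg_one_pow_char, hsum, neg_one_mul]

theorem exists_hermNorm_cons_eq_zero (hK : Nat.card K = p ^ 2) {n : ℕ} (w : Fin n → K) :
    ∃ x : K, hermNorm p (Fin.cons x w : Fin (n + 1) → K) = 0 := by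
  obtain ⟨x, hx⟩ := exists_pow_succ_eq_of_pow_eq_self hK (neg_hermNorm_pow_char p hK w)
  exact ⟨x, by rw [hermNorm_cons, hx, neg_add_cancel]⟩

theorem exists_ne_hermNorm_cons_eq_zero (hK : Nat.card K = p ^ 2) {n : ℕ} {w : Fin n → K}
    (hw : hermNorm p w ≠ 0) :
    ∃ x y : K, x ≠ y ∧ hermNorm p (Fin.cons x w : Fin (n + 1) → K) = 0 ∧
      hermNorm p (Fin.cons y w : Fin (n + 1) → K) = 0 := by
  obtain ⟨x, y, hxy, hx, hy⟩ :=
    exists_ne_pow_succ_eq hK (neg_ne_zero.mpr hw) (neg_hermNorm_pow_char p hK w)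
  exact ⟨x, y, hxy, by rw [hermNorm_cons, hx, neg_add_cancel],
    by rw [hermNorm_cons, hy, neg_add_cancel]⟩

theorem pow_le_card_isotropic (hK : Nat.card K = p ^ 2) (n : ℕ) :
    (p ^ 2) ^ (n + 1) ≤ Nat.card {v : Fin (n + 2) → K // v ≠ 0 ∧ hermNorm p v = 0} := by
  classical
  let tail : {v : Fin (n + 2) → K // v ≠ 0 ∧ hermNorm p v = 0} →
      {w : Fin (n + 1) → K // w ≠ 0} :=
    fun v ↦ ⟨Fin.tail v.1, tail_ne_zero_of_hermNorm_eq_zero p v.2.1 v.2.2⟩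
  have hsurj : Function.Surjective tail := by
    rintro ⟨w, hw⟩
    obtain ⟨x, hx⟩ := exists_hermNorm_cons_eq_zero p hK w
    exact ⟨⟨Fin.cons x w, fun h ↦ hw (congrArg Fin.tail h), hx⟩, rfl⟩
  have hninj : ¬Function.Injective tail := by
    obtain ⟨x, y, hxy, hx, hy⟩ := exists_ne_hermNorm_cons_eq_zero p hK
      (w := (Pi.single 0 1 : Fin (n + 1) → K)) (by simp [hermNorm_single])
    have hne (z : K) : (Fin.cons z (Pi.single 0 1) : Fin (n + 2) → K) ≠ 0 :=
      fun h ↦ by simpa using congrFun h 1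
    intro hinj
    have := @hinj ⟨_, hne x, hx⟩ ⟨_, hne y, hy⟩ rfl
    exact hxy (by simpa using congrFun (congrArg Subtype.val this) 0)
  have hlt := Finite.card_lt_of_surjective_not_injective hsurj hninj
  have hcard := Nat.card_subtype_ne_zero_add_one (V := Fin (n + 1) → K)
  rw [Nat.card_fun, hK, Nat.card_fin] at hcard
  omega

end Isotropic

theorem hermTheta_gt_proj_card (p : ℕ) [Fact p.Prime] (m : ℕ) (hm : 2 ≤ m) :
    ((p : ℤ) ^ 2 - 1) * (hermTheta p m : ℤ) > (p : ℤ) ^ (2 * m - 2) - 1 := by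
  obtain ⟨n, rfl⟩ : ∃ n, m = n + 2 := ⟨m - 2, by omega⟩
  have hK : Nat.card (GaloisField p 2) = p ^ 2 := GaloisField.card p 2 two_ne_zero
  have hcount : hermTheta p (n + 2) * (p ^ 2 - 1) =
      Nat.card {v : Fin (n + 2) → GaloisField p 2 // v ≠ 0 ∧ hermNorm p v = 0} := by
    rw [← hK, ← Nat.card_units]
    refine Projectivization.card_subtype_rep_mul_card_units (fun v ↦ hermNorm p v = 0) ?_
    intro c v
    simp [Units.smul_def, hermNorm_smul]
  have hlow := pow_le_card_isotropic p hK n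
  rw [← hcount] at hlow
  have hp : 1 ≤ p ^ 2 := Nat.one_le_pow _ _ (Fact.out : p.Prime).pos
  zify [hp] at hlow
  rw [show 2 * (n + 2) - 2 = 2 * (n + 1) by omega, pow_mul]
  linarith
end

section
/- Fix coprime positive integers m and n and an integer l ≥ 1. Then the set A'_gen, consisting of all γ ∈ (ℤ ∪ {∞})^l having at least one finite coordinate and such that for each i, either γ_i = ∞ or γ_i ∈ c_i(γ)·m·n + m·ℕ + n·ℕ, is a multi-semimodule; in particular, if γ, γ' ∈ A'_gen then the componentwise minimum min(γ, γ') lies in A'_gen. -/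
/-- `c_i(γ)`: the number of indices `j` with `γ j > γ i`. -/
noncomputable def cIdx {l : ℕ} (γ : Fin l → WithTop ℤ) (i : Fin l) : ℕ :=
  Set.ncard {j : Fin l | γ i < γ j}

/-- A multi-semimodule for parameters `m`, `n` inside `(ℤ ∪ {∞})^l`, where
`∞ = ⊤ : WithTop ℤ` (so `∞ + a = ∞` and `min(∞, a) = a`). -/
def IsMultiSemimodule (m n l : ℕ) (A : Set (Fin l → WithTop ℤ)) : Prop :=
  -- (1) boundedness below, and containing all sufficiently positive tuples
  (∃ N₁ : ℤ, ∀ γ ∈ A, ∀ i, (N₁ : WithTop ℤ) ≤ γ i) ∧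
  (∃ N₂ : ℤ, ∀ γ : Fin l → WithTop ℤ,
      (∀ i, (N₂ : WithTop ℤ) ≤ γ i) → (∃ i, γ i ≠ ⊤) → γ ∈ A) ∧
  -- (2) elements have a finite coordinate; stability under adding a·m̲ + b·n̲
  (∀ γ ∈ A, (∃ i, γ i ≠ ⊤) ∧
      ∀ a b : ℕ, (fun i => γ i + ((a * m + b * n : ℤ) : WithTop ℤ)) ∈ A) ∧
  -- (3) stability under componentwise minimum
  (∀ γ ∈ A, ∀ γ' ∈ A, (fun i => min (γ i) (γ' i)) ∈ A)

/-- The set `A'_gen` of all `γ` with at least one finite coordinate such that each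
coordinate is `∞` or lies in `c_i(γ)·m·n + m·ℕ + n·ℕ`. -/
noncomputable def AgenSet' (m n l : ℕ) : Set (Fin l → WithTop ℤ) :=
  {γ | (∃ i, γ i ≠ ⊤) ∧ ∀ i, γ i = ⊤ ∨
      ∃ a b : ℕ, γ i = (((cIdx γ i * m * n + a * m + b * n : ℕ) : ℤ) : WithTop ℤ)}

/-! The condition on a finite coordinate, `γ_i ∈ c·m·n + m·ℕ + n·ℕ` with `c = c_i(γ)`, weakens as
`c` decreases (since `m·n ∈ m·ℕ`). The count `c_i(γ)` depends only on the relative order of the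
coordinates, so it is unchanged by a common shift, and at a coordinate where `min(γ, γ')` takes the
value `γ_i` it is at most `c_i(γ)`. For large tuples, `m·ℕ + n·ℕ` contains every integer
`≥ (m - 1)(n - 1)` because `m` and `n` are coprime, and `c_i ≤ l`. -/

def InShiftedSemigroup (m n c : ℕ) (x : WithTop ℤ) : Prop :=
  x = ⊤ ∨ ∃ a b : ℕ, x = (((c * m * n + a * m + b * n : ℕ) : ℤ) : WithTop ℤ)

namespace InShiftedSemigroup

variable {m n c : ℕ} {x : WithTop ℤ}

lemma nonneg (hx : InShiftedSemigroup m n c x) : 0 ≤ x := by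
  rcases hx with rfl | ⟨a, b, rfl⟩
  · exact le_top
  · exact_mod_cast Int.natCast_nonneg _

lemma antitone {c' : ℕ} (hc : c' ≤ c) (hx : InShiftedSemigroup m n c x) :
    InShiftedSemigroup m n c' x := by
  rcases hx with hx | ⟨a, b, rfl⟩
  · exact .inl hx
  · obtain ⟨d, rfl⟩ := Nat.exists_eq_add_of_le hc
    exact .inr ⟨a + d * n, b, by congr 2; ring⟩

lemma add (hx : InShiftedSemigroup m n c x) (a b : ℕ) :
    InShiftedSemigroup m n c (x + ((a * m + b * n : ℤ) : WithTop ℤ)) := by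
  rcases hx with rfl | ⟨a', b', rfl⟩
  · exact .inl (WithTop.top_add _)
  · refine .inr ⟨a' + a, b' + b, ?_⟩
    norm_cast
    ring

lemma of_le (hmn : m.Coprime n)
    (hx : (((c * m * n + (m - 1) * (n - 1) : ℕ) : ℤ) : WithTop ℤ) ≤ x) :
    InShiftedSemigroup m n c x := by
  induction x using WithTop.recTopCoe with
  | top => exact .inl rfl
  | coe z =>
    right
    have hz : ((c * m * n + (m - 1) * (n - 1) : ℕ) : ℤ) ≤ z := WithTop.coe_le_coe.mp hx
    lift z to ℕ using (Int.natCast_nonneg _).trans hz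
    obtain ⟨a, b, hab⟩ := Nat.exists_add_mul_eq_of_gcd_dvd_of_mul_pred_le m n (z - c * m * n)
      (by simp [hmn.gcd_eq_one]) (by simp only [Nat.pred_eq_sub_one]; omega)
    exact ⟨a, b, by norm_cast; omega⟩

end InShiftedSemigroup

lemma mem_agenSet'_iff {m n l : ℕ} {γ : Fin l → WithTop ℤ} :
    γ ∈ AgenSet' m n l ↔ (∃ i, γ i ≠ ⊤) ∧ ∀ i, InShiftedSemigroup m n (cIdx γ i) (γ i) :=
  Iff.rfl

section cIdx

variable {l : ℕ}

lemma cIdx_le (γ : Fin l → WithTop ℤ) (i : Fin l) : cIdx γ i ≤ l := by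
  simpa [cIdx] using Set.ncard_le_card {j : Fin l | γ i < γ j}

lemma cIdx_comp_of_strictMono {f : WithTop ℤ → WithTop ℤ} (hf : StrictMono f)
    (γ : Fin l → WithTop ℤ) (i : Fin l) : cIdx (fun j => f (γ j)) i = cIdx γ i := by
  simp only [cIdx, hf.lt_iff_lt]

lemma cIdx_min_le_of_le {γ γ' : Fin l → WithTop ℤ} {i : Fin l} (h : γ i ≤ γ' i) :
    cIdx (fun j => min (γ j) (γ' j)) i ≤ cIdx γ i := by
  refine Set.ncard_le_ncard (fun j hj => ?_) (Set.toFinite _)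
  simp only [Set.mem_ofPred_eq, min_eq_left h] at hj ⊢
  exact hj.trans_le (min_le_left _ _)

end cIdx

namespace AgenSet'

variable {m n l : ℕ}

lemma nonneg {γ : Fin l → WithTop ℤ} (hγ : γ ∈ AgenSet' m n l) (i : Fin l) : 0 ≤ γ i :=
  (mem_agenSet'_iff.mp hγ).2 i |>.nonneg

lemma mem_of_le (hmn : m.Coprime n) {γ : Fin l → WithTop ℤ}
    (hγ : ∀ i, (((l * m * n + (m - 1) * (n - 1) : ℕ) : ℤ) : WithTop ℤ) ≤ γ i)
    (hfin : ∃ i, γ i ≠ ⊤) : γ ∈ AgenSet' m n l := by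
  refine ⟨hfin, fun i => InShiftedSemigroup.of_le hmn ((hγ i).trans' ?_)⟩
  have := Nat.mul_le_mul_right n (Nat.mul_le_mul_right m (cIdx_le γ i))
  exact_mod_cast Nat.add_le_add_right this _

lemma add_mem {γ : Fin l → WithTop ℤ} (hγ : γ ∈ AgenSet' m n l) (a b : ℕ) :
    (fun i => γ i + ((a * m + b * n : ℤ) : WithTop ℤ)) ∈ AgenSet' m n l := by
  have hmono : StrictMono (· + ((a * m + b * n : ℤ) : WithTop ℤ)) :=
    fun _ _ h => WithTop.add_lt_add_right WithTop.coe_ne_top h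
  obtain ⟨⟨i₀, hi₀⟩, hγ⟩ := mem_agenSet'_iff.mp hγ
  refine ⟨⟨i₀, WithTop.add_ne_top.mpr ⟨hi₀, WithTop.coe_ne_top⟩⟩, fun i => ?_⟩
  rw [cIdx_comp_of_strictMono hmono]
  exact (hγ i).add a b

lemma min_mem {γ γ' : Fin l → WithTop ℤ} (hγ : γ ∈ AgenSet' m n l)
    (hγ' : γ' ∈ AgenSet' m n l) : (fun i => min (γ i) (γ' i)) ∈ AgenSet' m n l := by
  obtain ⟨⟨i₀, hi₀⟩, hγ⟩ := mem_agenSet'_iff.mp hγ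
  obtain ⟨-, hγ'⟩ := mem_agenSet'_iff.mp hγ'
  refine ⟨⟨i₀, ne_top_of_le_ne_top hi₀ (min_le_left _ _)⟩, fun i => ?_⟩
  show InShiftedSemigroup m n _ (min (γ i) (γ' i))
  rcases le_total (γ i) (γ' i) with h | h
  · rw [min_eq_left h]
    exact (hγ i).antitone (cIdx_min_le_of_le h)
  · rw [min_eq_right h]
    have hc := cIdx_min_le_of_le (γ := γ') (γ' := γ) h
    simp only [min_comm (γ' _)] at hc
    exact (hγ' i).antitone hc

end AgenSet'

theorem AgenSet'_isMultiSemimodule_general (m n l : ℕ) (hmn : Nat.Coprime m n) :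
    IsMultiSemimodule m n l (AgenSet' m n l) ∧
      ∀ γ ∈ AgenSet' m n l, ∀ γ' ∈ AgenSet' m n l,
        (fun i => min (γ i) (γ' i)) ∈ AgenSet' m n l :=
  ⟨⟨⟨0, fun _ hγ => AgenSet'.nonneg hγ⟩,
    ⟨_, fun _ hγ hfin => AgenSet'.mem_of_le hmn hγ hfin⟩,
    fun _ hγ => ⟨hγ.1, AgenSet'.add_mem hγ⟩,
    fun _ hγ _ hγ' => AgenSet'.min_mem hγ hγ'⟩,
   fun _ hγ _ hγ' => AgenSet'.min_mem hγ hγ'⟩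

theorem AgenSet'_isMultiSemimodule (m n l : ℕ) (hm : 0 < m) (hn : 0 < n)
    (hmn : Nat.Coprime m n) (hl : 1 ≤ l) :
    IsMultiSemimodule m n l (AgenSet' m n l) ∧
      ∀ γ ∈ AgenSet' m n l, ∀ γ' ∈ AgenSet' m n l,
        (fun i => min (γ i) (γ' i)) ∈ AgenSet' m n l :=
  AgenSet'_isMultiSemimodule_general m n l hmn
end

section
/- Fix coprime positive integers m and n and an integer l ≥ 1. Let S ⊆ (ℤ ∪ {∞})^l consist of the all-zero tuple (0, …, 0) together with all coordinate permutations of the tuples having exactly i entries equal to ∞ and l − i entries equal to i·m·n, for 1 ≤ i ≤ l − 1, and let A_gen be the intersection of all multi-semimodules containing S. Then A_gen = A'_gen; that is, γ ∈ A_gen if and only if γ has at least one finite coordinate and for each i, either γ_i = ∞ or γ_i ∈ c_i(γ)·m·n + m·ℕ + n·ℕ. -/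
/-- The generating set `S`: the all-zero tuple together with all coordinate
permutations of the tuples with exactly `i` entries equal to `∞` and `l - i`
entries equal to `i·m·n`, for `1 ≤ i ≤ l - 1`. -/
def genSet (m n l : ℕ) : Set (Fin l → WithTop ℤ) :=
  {γ | γ = (fun _ => ((0 : ℤ) : WithTop ℤ)) ∨
    ∃ i : ℕ, 1 ≤ i ∧ i ≤ l - 1 ∧ ∃ T : Finset (Fin l), T.card = i ∧
      γ = fun j => if j ∈ T then (⊤ : WithTop ℤ) else (((i * m * n : ℕ) : ℤ) : WithTop ℤ)}

/-- `A_gen`: the smallest multi-semimodule containing the generating set `S`,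
i.e. the intersection of all multi-semimodules containing `S`. -/
def AgenSet (m n l : ℕ) : Set (Fin l → WithTop ℤ) :=
  ⋂₀ {A | IsMultiSemimodule m n l A ∧ genSet m n l ⊆ A}

/-!
`A'_gen` is a multi-semimodule containing `S`: its coordinate condition is invariant under
shifts, passes to the smaller side of a minimum because `c_i` can only drop there, and holds for
every coordinate `≥ l·m·n` because every integer `≥ m·n` lies in `m·ℕ + n·ℕ`.

Conversely, `γ ∈ A'_gen` is the minimum, over its finite coordinates `i`, of the tuple that is `∞`
above `γ_i` and `γ_i` elsewhere. That tuple is the generator of `S` with `∞` on `{j | γ_i < γ_j}`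
and `c_i(γ)·m·n` elsewhere, shifted by `γ_i - c_i(γ)·m·n ∈ m·ℕ + n·ℕ`.
-/

theorem Nat.Coprime.exists_add_mul_eq_of_mul_le {m n k : ℕ} (hmn : m.Coprime n)
    (hk : m * n ≤ k) : ∃ a b : ℕ, a * m + b * n = k :=
  Nat.exists_add_mul_eq_of_gcd_dvd_of_mul_pred_le m n k (by simp [hmn.gcd_eq_one])
    ((Nat.mul_le_mul (Nat.pred_le m) (Nat.pred_le n)).trans hk)

theorem exists_add_mul_eq_of_le {m n c c' : ℕ} (a b : ℕ) (h : c' ≤ c) :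
    ∃ a' b' : ℕ, c * m * n + a * m + b * n = c' * m * n + a' * m + b' * n := by
  obtain ⟨d, rfl⟩ := Nat.exists_eq_add_of_le h
  exact ⟨d * n + a, b, by ring⟩

section TopAbove

variable {ι α : Type*} [LinearOrder α] [OrderTop α]

def topAbove (γ : ι → α) (i : ι) : ι → α :=
  fun j => if γ i < γ j then ⊤ else γ i

theorem le_topAbove (γ : ι → α) (i : ι) : γ ≤ topAbove γ i := by
  intro j
  unfold topAbove
  split_ifs with h
  · exact le_top
  · exact not_lt.mp h

theorem topAbove_self (γ : ι → α) (i : ι) : topAbove γ i i = γ i := by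
  simp [topAbove]

theorem inf'_topAbove (γ : ι → α) {I : Finset ι} (hI : I.Nonempty)
    (hfin : ∀ j, γ j ≠ ⊤ → j ∈ I) : I.inf' hI (topAbove γ) = γ := by
  refine le_antisymm (fun j => ?_) (Finset.le_inf' hI _ fun i _ => le_topAbove γ i)
  rw [Finset.inf'_apply]
  by_cases hj : γ j = ⊤
  · exact hj ▸ le_top
  · exact (Finset.inf'_le _ (hfin j hj)).trans_eq (topAbove_self γ j)

end TopAbove

section CIdx

variable {l : ℕ}

theorem cIdx_eq_card_filter (γ : Fin l → WithTop ℤ) (i : Fin l) :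
    cIdx γ i = (Finset.univ.filter fun j => γ i < γ j).card := by
  rw [cIdx, ← Set.ncard_coe_finset, Finset.coe_filter_univ]

theorem cIdx_lt (γ : Fin l → WithTop ℤ) (i : Fin l) : cIdx γ i < l := by
  rw [cIdx_eq_card_filter]
  refine (Finset.card_lt_card ?_).trans_eq (Finset.card_fin l)
  exact Finset.filter_ssubset.2 ⟨i, Finset.mem_univ i, lt_irrefl _⟩

theorem cIdx_add_coe (γ : Fin l → WithTop ℤ) (x : ℤ) :
    cIdx (fun i => γ i + (x : WithTop ℤ)) = cIdx γ := by
  funext i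
  simp only [cIdx, WithTop.add_lt_add_iff_right WithTop.coe_ne_top]

theorem cIdx_le_of_le_of_eq {γ δ : Fin l → WithTop ℤ} {i : Fin l} (hle : δ ≤ γ)
    (hi : δ i = γ i) : cIdx δ i ≤ cIdx γ i :=
  Set.ncard_le_ncard (fun j (hj : δ i < δ j) => (hi ▸ hj).trans_le (hle j)) (Set.toFinite _)

theorem cIdx_const (v : WithTop ℤ) (i : Fin l) : cIdx (fun _ => v) i = 0 := by
  simp [cIdx]

theorem cIdx_ite_top {T : Finset (Fin l)} {v : ℤ} {i : Fin l} (hi : i ∉ T) :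
    cIdx (fun j => if j ∈ T then (⊤ : WithTop ℤ) else (v : WithTop ℤ)) i = T.card := by
  rw [cIdx_eq_card_filter]
  congr 1
  ext j
  by_cases hj : j ∈ T <;> simp [hi, hj]

end CIdx

def AdmissibleAt {l : ℕ} (m n : ℕ) (γ : Fin l → WithTop ℤ) (i : Fin l) : Prop :=
  γ i = ⊤ ∨ ∃ a b : ℕ, γ i = (((cIdx γ i * m * n + a * m + b * n : ℕ) : ℤ) : WithTop ℤ)

noncomputable def levelTuple {l : ℕ} (m n : ℕ) (γ : Fin l → WithTop ℤ) (i : Fin l) :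
    Fin l → WithTop ℤ :=
  fun j => if γ i < γ j then ⊤ else (((cIdx γ i * m * n : ℕ) : ℤ) : WithTop ℤ)

section AgenSet'

variable {m n l : ℕ}

theorem AdmissibleAt.of_le_of_eq {γ δ : Fin l → WithTop ℤ} {i : Fin l}
    (h : AdmissibleAt m n γ i) (hle : δ ≤ γ) (hi : δ i = γ i) : AdmissibleAt m n δ i := by
  rcases h with htop | ⟨a, b, hab⟩
  · exact Or.inl (hi.trans htop)
  · obtain ⟨a', b', h'⟩ := exists_add_mul_eq_of_le (m := m) (n := n) a b
      (cIdx_le_of_le_of_eq hle hi)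
    exact Or.inr ⟨a', b', by rw [hi, hab, h']⟩

theorem AdmissibleAt.add_coe {γ : Fin l → WithTop ℤ} {i : Fin l} (h : AdmissibleAt m n γ i)
    (a b : ℕ) : AdmissibleAt m n (fun j => γ j + ((a * m + b * n : ℤ) : WithTop ℤ)) i := by
  rcases h with htop | ⟨a₀, b₀, hab⟩
  · exact Or.inl (by simp [htop])
  · refine Or.inr ⟨a₀ + a, b₀ + b, ?_⟩
    show γ i + _ = _
    rw [cIdx_add_coe, hab, ← WithTop.coe_add]
    congr 1
    push_cast
    ring

theorem admissibleAt_of_le {γ : Fin l → WithTop ℤ} {i : Fin l} (hmn : m.Coprime n)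
    (hγ : (((l * m * n : ℕ) : ℤ) : WithTop ℤ) ≤ γ i) : AdmissibleAt m n γ i := by
  by_cases htop : γ i = ⊤
  · exact Or.inl htop
  obtain ⟨v, hv⟩ := WithTop.ne_top_iff_exists.mp htop
  rw [← hv, WithTop.coe_le_coe] at hγ
  lift v to ℕ using (Int.natCast_nonneg _).trans hγ
  have hlv : l * m * n ≤ v := by exact_mod_cast hγ
  have hc : (cIdx γ i + 1) * m * n ≤ l * m * n :=
    Nat.mul_le_mul_right n (Nat.mul_le_mul_right m (cIdx_lt γ i))
  rw [add_mul, add_mul, one_mul] at hc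
  obtain ⟨a, b, hab⟩ := hmn.exists_add_mul_eq_of_mul_le (k := v - cIdx γ i * m * n) (by omega)
  refine Or.inr ⟨a, b, ?_⟩
  rw [← hv, add_assoc, hab, Nat.add_sub_cancel' (by omega)]

theorem nonneg_of_mem_AgenSet' {γ : Fin l → WithTop ℤ} (hγ : γ ∈ AgenSet' m n l) (i : Fin l) :
    ((0 : ℤ) : WithTop ℤ) ≤ γ i := by
  rcases hγ.2 i with htop | ⟨a, b, hab⟩
  · exact htop ▸ le_top
  · rw [hab, WithTop.coe_le_coe]
    exact Int.natCast_nonneg _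

theorem isMultiSemimodule_AgenSet' (hmn : m.Coprime n) :
    IsMultiSemimodule m n l (AgenSet' m n l) := by
  refine ⟨⟨0, fun γ hγ => nonneg_of_mem_AgenSet' hγ⟩,
    ⟨l * m * n, fun γ hγ hfin => ⟨hfin, fun i => admissibleAt_of_le hmn (hγ i)⟩⟩,
    fun γ ⟨⟨i, hi⟩, hadm⟩ =>
      ⟨⟨i, hi⟩, fun a b => ⟨⟨i, ?_⟩, fun j => AdmissibleAt.add_coe (hadm j) a b⟩⟩,
    fun γ ⟨⟨i, hi⟩, hadm⟩ γ' ⟨_, hadm'⟩ => ⟨⟨i, ?_⟩, fun j => ?_⟩⟩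
  · exact WithTop.add_ne_top.mpr ⟨hi, WithTop.coe_ne_top⟩
  · exact fun h => hi (min_eq_top.mp h).1
  · rcases min_choice (γ j) (γ' j) with h | h
    · exact AdmissibleAt.of_le_of_eq (hadm j) (fun _ => min_le_left _ _) h
    · exact AdmissibleAt.of_le_of_eq (hadm' j) (fun _ => min_le_right _ _) h

theorem genSet_subset_AgenSet' (hl : 1 ≤ l) : genSet m n l ⊆ AgenSet' m n l := by
  rintro γ (rfl | ⟨k, -, hkl, T, rfl, rfl⟩)
  · exact ⟨⟨⟨0, hl⟩, WithTop.coe_ne_top⟩, fun j => Or.inr ⟨0, 0, by simp [cIdx_const]⟩⟩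
  · obtain ⟨j₀, -, hj₀⟩ := Finset.exists_mem_notMem_of_card_lt_card
      (s := T) (t := Finset.univ) (by rw [Finset.card_univ, Fintype.card_fin]; omega)
    refine ⟨⟨j₀, by simp only [hj₀, if_false]; exact WithTop.coe_ne_top⟩, fun j => ?_⟩
    by_cases hj : j ∈ T
    · exact Or.inl (by simp [hj])
    · exact Or.inr ⟨0, 0, by rw [cIdx_ite_top hj]; simp [hj]⟩

theorem levelTuple_mem_genSet (γ : Fin l → WithTop ℤ) (i : Fin l) :
    levelTuple m n γ i ∈ genSet m n l := by
  by_cases hc : cIdx γ i = 0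
  · refine Or.inl (funext fun j => ?_)
    have hj : ¬ γ i < γ j := by
      rw [cIdx_eq_card_filter, Finset.card_eq_zero, Finset.filter_eq_empty_iff] at hc
      exact hc (Finset.mem_univ j)
    simp [levelTuple, hc, hj]
  · refine Or.inr ⟨cIdx γ i, Nat.one_le_iff_ne_zero.mpr hc, by have := cIdx_lt γ i; omega,
      Finset.univ.filter fun j => γ i < γ j, (cIdx_eq_card_filter γ i).symm, ?_⟩
    funext j
    simp [levelTuple]

theorem topAbove_eq_levelTuple_add {γ : Fin l → WithTop ℤ} {i : Fin l} {a b : ℕ}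
    (h : γ i = (((cIdx γ i * m * n + a * m + b * n : ℕ) : ℤ) : WithTop ℤ)) :
    topAbove γ i = fun j => levelTuple m n γ i j + ((a * m + b * n : ℤ) : WithTop ℤ) := by
  funext j
  unfold topAbove levelTuple
  split_ifs
  · rfl
  · rw [h, ← WithTop.coe_add]
    congr 1
    push_cast
    ring

theorem AgenSet'_subset {A : Set (Fin l → WithTop ℤ)} (hA : IsMultiSemimodule m n l A)
    (hS : genSet m n l ⊆ A) : AgenSet' m n l ⊆ A := by
  obtain ⟨-, -, hshift, hmin⟩ := hA
  rintro γ ⟨⟨i₀, hi₀⟩, hadm⟩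
  let I := Finset.univ.filter fun i => γ i ≠ ⊤
  have hI : I.Nonempty := ⟨i₀, by simp [I, hi₀]⟩
  have htop : ∀ i ∈ I, topAbove γ i ∈ A := by
    intro i hi
    obtain ⟨a, b, hab⟩ := (hadm i).resolve_left (Finset.mem_filter.mp hi).2
    rw [topAbove_eq_levelTuple_add hab]
    exact (hshift _ (hS (levelTuple_mem_genSet γ i))).2 a b
  rw [← inf'_topAbove γ hI (fun j hj => by simp [I, hj])]
  exact Finset.inf'_mem A hmin I hI _ htop

end AgenSet'

theorem AgenSet_eq_AgenSet'_general (m n l : ℕ)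
    (hmn : Nat.Coprime m n) (hl : 1 ≤ l) :
    AgenSet m n l = AgenSet' m n l :=
  Set.Subset.antisymm
    (Set.sInter_subset_of_mem ⟨isMultiSemimodule_AgenSet' hmn, genSet_subset_AgenSet' hl⟩)
    (Set.subset_sInter fun _ hA => AgenSet'_subset hA.1 hA.2)

theorem AgenSet_eq_AgenSet' (m n l : ℕ) (hm : 0 < m) (hn : 0 < n)
    (hmn : Nat.Coprime m n) (hl : 1 ≤ l) :
    AgenSet m n l = AgenSet' m n l :=
  AgenSet_eq_AgenSet'_general m n l hmn hl
end

section
/- Let k be a field, L = k((t)) the field of formal Laurent series, O = k⟦t⟧, and h ≥ 1. Let Λ ⊆ L^h be an O-lattice, i.e., an O-submodule with t^N·O^h ⊆ Λ ⊆ t^{−N}·O^h for some N ≥ 0. Suppose there is an integer l such that the set of start indices of the nonzero elements of Λ is exactly {i ∈ ℤ : i ≥ l}. Then Λ is the O-submodule of L^h generated by {e_i : i ∈ ℤ, i ≥ l} (equivalently, the free O-module on e_l, e_{l+1}, …, e_{l+h−1}). -/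
/-!
Write `S_l` (`eSpan k h l`) for the `O`-span of the `e_i` with `i ≥ l`. A vector whose coefficients vanish below
`l` lies in `S_l`, because each of its components is `t^q` times a power series for the least `q`
with `q·h + r ≥ l`. The lower lattice bound gives `S_{Nh} ⊆ Λ`. Going down from `Nh`: if some
`v ∈ Λ` starts at `i` and `S_{i+1} ⊆ Λ`, then `e_i` differs from a scalar multiple of `v` by an
element of `S_{i+1}`, so `S_i ⊆ Λ`; hence `S_l ⊆ Λ`. Conversely, by the upper lattice bound every
nonzero `v ∈ Λ` has a start index, which is `≥ l` by the chart, so `v ∈ S_l`.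
-/

/-- The uniformizer `t` of `L = k((t))`, realized as the Laurent series `t`. -/
noncomputable def tVar (k : Type*) [Field k] : LaurentSeries k :=
  HahnSeries.single (1 : ℤ) (1 : k)

/-- For `i = q·h + r` with `0 ≤ r < h`, the coefficient `a_i` in the expansion
`v = Σ_i a_i e_i`, i.e. the coefficient of `t^q` in the `r`-th component of `v`. -/
noncomputable def coeffAt {k : Type*} [Field k] (h : ℕ) (v : Fin h → LaurentSeries k)
    (i : ℤ) : k :=
  if hr : (i % (h : ℤ)).toNat < h then (v ⟨(i % (h : ℤ)).toNat, hr⟩).coeff (i / (h : ℤ))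
  else 0

/-- `i` is the start index of `v`: the minimal index with nonzero coefficient in the
expansion `v = Σ_i a_i e_i`. -/
def IsStartIndex {k : Type*} [Field k] (h : ℕ) (v : Fin h → LaurentSeries k) (i : ℤ) : Prop :=
  coeffAt h v i ≠ 0 ∧ ∀ j : ℤ, j < i → coeffAt h v j = 0

/-- The vector `e_i := t^q · ε_r` for `i = q·h + r` with `0 ≤ r < h`,
where `ε_0, …, ε_{h-1}` is the standard basis of `L^h`. -/
noncomputable def eVec (k : Type*) [Field k] (h : ℕ) (i : ℤ) : Fin h → LaurentSeries k :=
  fun r => if hr : (i % (h : ℤ)).toNat < h then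
    (if r = ⟨(i % (h : ℤ)).toNat, hr⟩ then (tVar k) ^ (i / (h : ℤ)) else 0)
  else 0

-- `(j : Fin h)` for `j : ℤ` is the residue of `j` modulo `h`.
open scoped Fin.IntCast

section Coefficients

variable {k : Type*} [Field k] {h : ℕ}

theorem tVar_zpow (q : ℤ) : tVar k ^ q = HahnSeries.single q 1 :=
  (RatFunc.single_zpow q).symm

theorem exists_eq_tVar_zpow_mul {x : LaurentSeries k} {q : ℤ}
    (hx : ∀ p < q, x.coeff p = 0) : ∃ f : PowerSeries k, x = tVar k ^ q * f := by
  refine ⟨PowerSeries.mk fun m => x.coeff (q + m), ?_⟩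
  ext n
  rw [tVar_zpow, HahnSeries.coeff_single_mul, one_mul, PowerSeries.coeff_coe]
  split_ifs with hn
  · exact hx n (by omega)
  · rw [PowerSeries.coeff_mk]
    congr 1
    omega

theorem powerSeries_smul_apply (f : PowerSeries k) (v : Fin h → LaurentSeries k) (r : Fin h) :
    (f • v) r = f * v r :=
  Algebra.smul_def f (v r)

variable [NeZero h]

theorem intCast_mul_add_fin (q : ℤ) (s : Fin h) : ((q * h + s : ℤ) : Fin h) = s := by
  ext
  have : (s : ℤ) < h := by exact_mod_cast s.isLt
  simp [Int.emod_eq_of_lt (by positivity) this]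

theorem mul_add_fin_ediv (q : ℤ) (s : Fin h) : (q * h + s) / (h : ℤ) = q := by
  have : (s : ℤ) < h := by exact_mod_cast s.isLt
  rw [add_comm, Int.add_mul_ediv_right _ _ (by simp [NeZero.ne h]),
    Int.ediv_eq_zero_of_lt (by positivity) this, zero_add]

theorem eq_of_intCast_fin_eq_of_ediv_eq {i j : ℤ} (hr : (i : Fin h) = j)
    (hq : i / (h : ℤ) = j / h) : i = j := by
  have hh : (h : ℤ) ≠ 0 := by simp [NeZero.ne h]
  have hmod : i % h = j % h := by
    have := congrArg Fin.val hr
    simp only [Fin.val_intCast] at this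
    have := Int.emod_nonneg i hh
    have := Int.emod_nonneg j hh
    omega
  rw [← Int.emod_add_mul_ediv i h, ← Int.emod_add_mul_ediv j h, hmod, hq]

theorem coeffAt_eq (v : Fin h → LaurentSeries k) (j : ℤ) :
    coeffAt h v j = (v j).coeff (j / h) := by
  rw [coeffAt, dif_pos (by simpa using Fin.isLt (j : Fin h))]
  congr 2
  exact Fin.ext (Fin.val_intCast j).symm

theorem coeffAt_mul_add (v : Fin h → LaurentSeries k) (q : ℤ) (s : Fin h) :
    coeffAt h v (q * h + s) = (v s).coeff q := by
  rw [coeffAt_eq, intCast_mul_add_fin, mul_add_fin_ediv]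

theorem coeffAt_sub (v w : Fin h → LaurentSeries k) (j : ℤ) :
    coeffAt h (v - w) j = coeffAt h v j - coeffAt h w j := by
  simp [coeffAt_eq]

theorem coeffAt_C_smul (c : k) (v : Fin h → LaurentSeries k) (j : ℤ) :
    coeffAt h (PowerSeries.C c • v) j = c * coeffAt h v j := by
  rw [coeffAt_eq, coeffAt_eq, powerSeries_smul_apply, PowerSeries.coe_C, HahnSeries.C_apply,
    HahnSeries.coeff_single_zero_mul]

theorem eVec_eq_piSingle (i : ℤ) : eVec k h i = Pi.single (i : Fin h) (tVar k ^ (i / h)) := by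
  ext r : 1
  rw [eVec, dif_pos (by simpa using Fin.isLt (i : Fin h)), Pi.single_apply]
  congr 1
  simp [Fin.ext_iff]

theorem eVec_mul_add (q : ℤ) (s : Fin h) : eVec k h (q * h + s) = Pi.single s (tVar k ^ q) := by
  rw [eVec_eq_piSingle, intCast_mul_add_fin, mul_add_fin_ediv]

theorem coeffAt_eVec (i j : ℤ) : coeffAt h (eVec k h i) j = if j = i then 1 else 0 := by
  rw [coeffAt_eq, eVec_eq_piSingle, Pi.single_apply, tVar_zpow]
  by_cases hr : (j : Fin h) = i
  · simp only [hr, if_true, HahnSeries.coeff_single]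
    by_cases hq : j / (h : ℤ) = i / h
    · simp [eq_of_intCast_fin_eq_of_ediv_eq hr hq]
    · simp [hq, show j ≠ i by rintro rfl; exact hq rfl]
  · simp [hr, show j ≠ i by rintro rfl; exact hr rfl]

theorem exists_isStartIndex {v : Fin h → LaurentSeries k} (hv : v ≠ 0) {B : ℤ}
    (hB : ∀ j < B, coeffAt h v j = 0) : ∃ i, IsStartIndex h v i := by
  classical
  obtain ⟨s, hs⟩ := Function.ne_iff.mp hv
  obtain ⟨q, hq⟩ : ∃ q, (v s).coeff q ≠ 0 := by
    by_contra! hq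
    exact hs (HahnSeries.ext (funext hq))
  obtain ⟨i, hi, hmin⟩ := Int.exists_least_of_bdd (P := fun j => coeffAt h v j ≠ 0)
    ⟨B, fun j hj => not_lt.mp fun hjB => hj (hB j hjB)⟩
    ⟨q * h + s, by rwa [coeffAt_mul_add]⟩
  exact ⟨i, hi, fun j hj => by_contra fun hj' => (hmin j hj').not_gt hj⟩

theorem coeffAt_eq_zero_of_lt_neg_mul {v : Fin h → LaurentSeries k} {N : ℕ}
    (hv : ∀ r, ∃ f : PowerSeries k, v r = tVar k ^ (-(N : ℤ)) * f) {j : ℤ}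
    (hj : j < -(N * h : ℤ)) : coeffAt h v j = 0 := by
  obtain ⟨f, hf⟩ := hv j
  have hq : j / (h : ℤ) < -N := by
    rw [Int.ediv_lt_iff_lt_mul (by simp [Nat.pos_of_ne_zero (NeZero.ne h)])]
    linarith
  rw [coeffAt_eq, hf, tVar_zpow, HahnSeries.coeff_single_mul, PowerSeries.coeff_coe,
    if_pos (by omega), mul_zero]

end Coefficients

noncomputable def eSpan (k : Type*) [Field k] (h : ℕ) (l : ℤ) :
    Submodule (PowerSeries k) (Fin h → LaurentSeries k) :=
  Submodule.span (PowerSeries k) {w | ∃ i : ℤ, l ≤ i ∧ w = eVec k h i}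

section Span

variable {k : Type*} [Field k] {h : ℕ}

theorem eVec_mem_eSpan {l i : ℤ} (hi : l ≤ i) : eVec k h i ∈ eSpan k h l :=
  Submodule.subset_span ⟨i, hi, rfl⟩

theorem eSpan_anti {l m : ℤ} (hlm : l ≤ m) : eSpan k h m ≤ eSpan k h l :=
  Submodule.span_mono fun _ ⟨i, hi, hw⟩ => ⟨i, hlm.trans hi, hw⟩

theorem eSpan_le_iff {l : ℤ} {Λ : Submodule (PowerSeries k) (Fin h → LaurentSeries k)} :
    eSpan k h l ≤ Λ ↔ ∀ i, l ≤ i → eVec k h i ∈ Λ := by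
  rw [eSpan, Submodule.span_le]
  exact ⟨fun hΛ i hi => hΛ ⟨i, hi, rfl⟩, fun hΛ _ ⟨i, hi, hw⟩ => hw ▸ hΛ i hi⟩

variable [NeZero h]

theorem smul_eVec_mul_add (f : PowerSeries k) (q : ℤ) (s : Fin h) :
    f • eVec k h (q * h + s) = Pi.single s (tVar k ^ q * f) := by
  ext r : 1
  rw [powerSeries_smul_apply, eVec_mul_add]
  by_cases hr : r = s
  · subst hr
    simp [mul_comm]
  · simp [hr]

theorem mem_eSpan_of_coeffAt_eq_zero {l : ℤ} {v : Fin h → LaurentSeries k}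
    (hv : ∀ j < l, coeffAt h v j = 0) : v ∈ eSpan k h l := by
  rw [← Finset.univ_sum_single v]
  refine Submodule.sum_mem _ fun s _ => ?_
  -- `q` is the least integer with `l ≤ q * h + s`
  set q := -(((s : ℕ) - l) / (h : ℤ))
  have hh : (0 : ℤ) < h := by simp [Nat.pos_of_ne_zero (NeZero.ne h)]
  have hq : q * h + s = l + (s - l) % h := by
    have := Int.emod_add_mul_ediv (s - l) h
    simp only [q]
    linarith
  obtain ⟨f, hf⟩ := exists_eq_tVar_zpow_mul (x := v s) (q := q) fun p hp => by
    rw [← coeffAt_mul_add]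
    refine hv _ ?_
    have : p * h ≤ (q - 1) * h := Int.mul_le_mul_of_nonneg_right (by omega) hh.le
    have := Int.emod_lt_of_pos (s - l) hh
    linarith
  rw [hf, ← smul_eVec_mul_add]
  refine Submodule.smul_mem _ _ (eVec_mem_eSpan ?_)
  have := Int.emod_nonneg (s - l) hh.ne'
  omega

end Span

section Lattice

variable {k : Type*} [Field k] {h : ℕ} [NeZero h]
  {Λ : Submodule (PowerSeries k) (Fin h → LaurentSeries k)}

theorem eSpan_natCast_mul_le {N : ℕ}
    (hΛ : ∀ f : Fin h → PowerSeries k, (fun r => tVar k ^ (N : ℤ) * (f r : LaurentSeries k)) ∈ Λ) :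
    eSpan k h (N * h) ≤ Λ := by
  refine eSpan_le_iff.mpr fun i hi => ?_
  have hh : (0 : ℤ) < h := by simp [Nat.pos_of_ne_zero (NeZero.ne h)]
  choose f hf using fun r : Fin h => exists_eq_tVar_zpow_mul (x := eVec k h i r) (q := N)
    fun p hp => by
      rw [← coeffAt_mul_add, coeffAt_eVec, if_neg]
      have : (p + 1) * h ≤ N * h := Int.mul_le_mul_of_nonneg_right (by omega) hh.le
      have : ((r : ℕ) : ℤ) < h := by exact_mod_cast r.isLt
      linarith
  rw [show eVec k h i = _ from funext hf]
  exact hΛ f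

theorem eSpan_le_of_isStartIndex {i : ℤ} {v : Fin h → LaurentSeries k} (hv : v ∈ Λ)
    (hvi : IsStartIndex h v i) (hΛ : eSpan k h (i + 1) ≤ Λ) : eSpan k h i ≤ Λ := by
  set c := coeffAt h v i
  have hrest : PowerSeries.C c⁻¹ • v - eVec k h i ∈ eSpan k h (i + 1) := by
    refine mem_eSpan_of_coeffAt_eq_zero fun j hj => ?_
    rw [coeffAt_sub, coeffAt_C_smul, coeffAt_eVec]
    rcases (Int.lt_add_one_iff.mp hj).lt_or_eq with hj | rfl
    · rw [hvi.2 j hj, if_neg hj.ne]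
      simp
    · rw [if_pos rfl, inv_mul_cancel₀ hvi.1, sub_self]
  have hei : eVec k h i ∈ Λ := by
    simpa using Λ.sub_mem (Λ.smul_mem (PowerSeries.C c⁻¹) hv) (hΛ hrest)
  refine eSpan_le_iff.mpr fun j hj => ?_
  rcases hj.eq_or_lt with rfl | hj
  · exact hei
  · exact hΛ (eVec_mem_eSpan hj)

theorem eSpan_le_of_forall_isStartIndex {l m : ℤ} (hm : eSpan k h m ≤ Λ)
    (hstart : ∀ i, l ≤ i → i < m → ∃ v ∈ Λ, IsStartIndex h v i) : eSpan k h l ≤ Λ := by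
  suffices ∀ n ≤ max l m, l ≤ n → eSpan k h n ≤ Λ from this l (le_max_left l m) le_rfl
  intro n hn
  induction n, hn using Int.leInductionDown with
  | base => exact fun _ => (eSpan_anti (le_max_right l m)).trans hm
  | pred n hn ih =>
    intro hl
    obtain ⟨v, hv, hvi⟩ := hstart (n - 1) hl (by omega)
    exact eSpan_le_of_isStartIndex hv hvi (by simpa using ih (by omega))

end Lattice

/-- A lattice whose weak EL chart is `{i : ℤ | i ≥ l}` is the `O`-module generated by the
`e_i` with `i ≥ l`. -/
theorem lattice_of_weak_EL_chart_interval
    (k : Type*) [Field k] (h : ℕ) (hh : 1 ≤ h)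
    (Λ : Submodule (PowerSeries k) (Fin h → LaurentSeries k))
    -- `Λ` is a lattice: `t^N · O^h ⊆ Λ ⊆ t^(−N) · O^h` for some `N ≥ 0`
    (hlat : ∃ N : ℕ,
      (∀ f : Fin h → PowerSeries k,
        (fun r => (tVar k) ^ (N : ℤ) * ((f r : PowerSeries k) : LaurentSeries k)) ∈ Λ) ∧
      (∀ v ∈ Λ, ∀ r : Fin h, ∃ f : PowerSeries k,
        v r = (tVar k) ^ (-(N : ℤ)) * ((f : PowerSeries k) : LaurentSeries k)))
    (l : ℤ)
    -- the weak EL chart of `Λ` is exactly `{i : ℤ | i ≥ l}`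
    (hchart : {i : ℤ | ∃ v : Fin h → LaurentSeries k, v ∈ Λ ∧ v ≠ 0 ∧ IsStartIndex h v i}
        = {i : ℤ | l ≤ i}) :
    Λ = Submodule.span (PowerSeries k)
        {w : Fin h → LaurentSeries k | ∃ i : ℤ, l ≤ i ∧ w = eVec k h i} := by
  have : NeZero h := ⟨by omega⟩
  obtain ⟨N, hlower, hupper⟩ := hlat
  change Λ = eSpan k h l
  refine le_antisymm (fun v hv => ?_) ?_
  · by_cases hv0 : v = 0
    · exact hv0 ▸ Submodule.zero_mem _
    obtain ⟨i, hvi⟩ := exists_isStartIndex hv0 fun j => coeffAt_eq_zero_of_lt_neg_mul (hupper v hv)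
    have hli : l ≤ i := (Set.ext_iff.mp hchart i).mp ⟨v, hv, hv0, hvi⟩
    exact mem_eSpan_of_coeffAt_eq_zero fun j hj => hvi.2 j (by omega)
  · refine eSpan_le_of_forall_isStartIndex (eSpan_natCast_mul_le hlower) fun i hi _ => ?_
    obtain ⟨v, hv, -, hvi⟩ := (Set.ext_iff.mp hchart i).mpr hi
    exact ⟨v, hv, hvi⟩
end
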